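/- Let Π be a ground logic program over atoms A with rules indexed by a finite type R, and let T(Π) be its transformed program over the atom type A ⊎ R. If M' ⊆ A ⊎ R is a stable model of T(Π), then M = M' ∩ A (the set of original atoms in M') is a supported model of Π. -/

import Mathlib

/-- A ground rule: head ← body⁺, not body⁻. -/
structure Rule (A : Type*) where
  head : A
  bodyPos : Finset A
  bodyNeg : Finset A
deriving DecidableEq

/-- The body of rule `r` is true in interpretation `M`:
`body⁺(r) ⊆ M` and `body⁻(r) ∩ M = ∅`. -/
def BodyTrue {A : Type*} (M : Set A) (r : Rule A) : Prop :=
  ↑r.bodyPos ⊆ M ∧ ∀ a ∈ r.bodyNeg, a ∉ M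

/-- `M` is a model of the program `P` (a family of rules indexed by `R`). -/
def IsModel {A R : Type*} (P : R → Rule A) (M : Set A) : Prop :=
  ∀ r, BodyTrue M (P r) → (P r).head ∈ M

/-- `M` is a supported model of `P`: a model in which every true atom
is the head of some rule of `P` whose body is true in `M`. -/
def IsSupported {A R : Type*} (P : R → Rule A) (M : Set A) : Prop :=
  IsModel P M ∧ ∀ a ∈ M, ∃ r, (P r).head = a ∧ ↑(P r).bodyPos ⊆ M ∧
    ∀ b ∈ (P r).bodyNeg, b ∉ M

/-- `N` is a model of the Gelfond–Lifschitz reduct `P^M`: for every rule of `P`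
surviving the reduct (i.e. with `body⁻(r) ∩ M = ∅`), whose negative literals are
removed, if its positive body holds in `N` then so does its head. -/
def ReductModel {A R : Type*} (P : R → Rule A) (M N : Set A) : Prop :=
  ∀ r, (∀ a ∈ (P r).bodyNeg, a ∉ M) → ↑(P r).bodyPos ⊆ N → (P r).head ∈ N

/-- `M` is a stable model of `P`: `M` is the least model of the reduct `P^M`. -/
def IsStable {A R : Type*} (P : R → Rule A) (M : Set A) : Prop :=
  ReductModel P M M ∧ ∀ N, ReductModel P M N → M ⊆ N

/-- Index type for the rules of the transformed program `T(P)`: one rule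
`head(r) ← not dm_r` per rule `r`, one rule `dm_r ← not l` per `l ∈ body⁺(r)`,
and one rule `dm_r ← l` per `l ∈ body⁻(r)`. -/
abbrev TransIdx {A R : Type*} (P : R → Rule A) : Type _ :=
  R ⊕ ((Σ r : R, {l // l ∈ (P r).bodyPos}) ⊕ (Σ r : R, {l // l ∈ (P r).bodyNeg}))

/-- The transformed program `T(P)` over atoms `A ⊕ R`, where `Sum.inr r`
plays the role of the fresh auxiliary atom `dm_r`. -/
def Transform {A R : Type*} (P : R → Rule A) : TransIdx P → Rule (A ⊕ R)
  | Sum.inl r => ⟨Sum.inl (P r).head, ∅, {Sum.inr r}⟩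
  | Sum.inr (Sum.inl ⟨r, l⟩) => ⟨Sum.inr r, ∅, {Sum.inl l.1}⟩
  | Sum.inr (Sum.inr ⟨r, l⟩) => ⟨Sum.inr r, {Sum.inl l.1}, ∅⟩

/-- `Lift P M = M ∪ { dm_r | the body of rule r is false in M }`,
viewing `M ⊆ A` as a subset of `A ⊕ R` via the left injection. -/
def Lift {A R : Type*} (P : R → Rule A) (M : Set A) : Set (A ⊕ R) :=
  Sum.inl '' M ∪ Sum.inr '' {r | ¬ BodyTrue M (P r)}


/-!
A stable model is supported: if an atom `a` of a stable model `M` had no rule with head `a`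
whose body is true in `M`, then `M \ {a}` would still be a model of the reduct `Π^M`,
contradicting minimality. In a supported model `M'` of `T(Π)` the atom `dm_r` is true exactly
when the body of `r` is false in `M = M' ∩ A`, since its only rules are `dm_r ← not l` and
`dm_r ← l` for the literals of that body; and an original atom is true exactly when some rule
`head(r) ← not dm_r` has a true body. Hence `M` is a supported model of `Π`.
-/

section Stable

variable {A R : Type*} {P : R → Rule A} {M : Set A}

theorem IsStable.isModel (h : IsStable P M) : IsModel P M :=
  fun r hr => h.1 r hr.2 hr.1

theorem IsStable.exists_head_eq_bodyTrue (h : IsStable P M) {a : A} (ha : a ∈ M) :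
    ∃ r, (P r).head = a ∧ BodyTrue M (P r) := by
  by_contra! hno
  have hred : ReductModel P M (M \ {a}) := fun r hneg hpos =>
    ⟨h.1 r hneg (hpos.trans Set.sdiff_subset),
      fun hra => hno r hra ⟨hpos.trans Set.sdiff_subset, hneg⟩⟩
  exact (h.2 _ hred ha).2 rfl

theorem IsStable.isSupported (h : IsStable P M) : IsSupported P M :=
  ⟨h.isModel, fun _ ha => h.exists_head_eq_bodyTrue ha⟩

end Stable

section Transform

variable {A R : Type*} {P : R → Rule A} {M' : Set (A ⊕ R)}

@[simp]
theorem bodyTrue_transform_inl (r : R) :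
    BodyTrue M' (Transform P (.inl r)) ↔ Sum.inr r ∉ M' := by
  simp [BodyTrue, Transform]

@[simp]
theorem bodyTrue_transform_inr_inl (r : R) (l : {l // l ∈ (P r).bodyPos}) :
    BodyTrue M' (Transform P (.inr (.inl ⟨r, l⟩))) ↔ Sum.inl l.1 ∉ M' := by
  simp [BodyTrue, Transform]

@[simp]
theorem bodyTrue_transform_inr_inr (r : R) (l : {l // l ∈ (P r).bodyNeg}) :
    BodyTrue M' (Transform P (.inr (.inr ⟨r, l⟩))) ↔ Sum.inl l.1 ∈ M' := by
  simp [BodyTrue, Transform]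

theorem IsSupported.inr_mem_transform_iff (h : IsSupported (Transform P) M') (r : R) :
    Sum.inr r ∈ M' ↔ ¬ BodyTrue (Sum.inl ⁻¹' M') (P r) := by
  constructor
  · rintro hr ⟨hpos, hneg⟩
    obtain ⟨i, hi, hbody⟩ := h.2 _ hr
    rcases i with s | ⟨s, l⟩ | ⟨s, l⟩
    · simp [Transform] at hi
    · obtain rfl : s = r := by simpa [Transform] using hi
      exact (bodyTrue_transform_inr_inl s l).1 hbody (hpos l.2)
    · obtain rfl : s = r := by simpa [Transform] using hi
      exact hneg l.1 l.2 ((bodyTrue_transform_inr_inr s l).1 hbody)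
  · intro hfalse
    by_cases hpos : ↑(P r).bodyPos ⊆ Sum.inl ⁻¹' M'
    · obtain ⟨l, hl, hlM⟩ : ∃ l ∈ (P r).bodyNeg, Sum.inl l ∈ M' := by
        simpa [BodyTrue, hpos] using hfalse
      exact h.1 (.inr (.inr ⟨r, ⟨l, hl⟩⟩)) ((bodyTrue_transform_inr_inr _ _).2 hlM)
    · obtain ⟨l, hl, hlM⟩ := Set.not_subset.1 hpos
      exact h.1 (.inr (.inl ⟨r, ⟨l, hl⟩⟩)) ((bodyTrue_transform_inr_inl _ _).2 hlM)

theorem IsSupported.preimage_inl_of_transform (h : IsSupported (Transform P) M') :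
    IsSupported P (Sum.inl ⁻¹' M') := by
  refine ⟨fun r hbody => ?_, fun a ha => ?_⟩
  · refine h.1 (.inl r) ((bodyTrue_transform_inl r).2 fun hr => ?_)
    exact (h.inr_mem_transform_iff r).1 hr hbody
  · obtain ⟨i, hi, hbody⟩ := h.2 _ ha
    rcases i with r | _ | _
    · refine ⟨r, Sum.inl_injective hi, ?_⟩
      exact not_not.1 fun hfalse =>
        (bodyTrue_transform_inl r).1 hbody ((h.inr_mem_transform_iff r).2 hfalse)
    all_goals simp [Transform] at hi

end Transform

theorem stable_model_of_transform_gives_supported_model_general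
    {A R : Type*} (P : R → Rule A) (M' : Set (A ⊕ R))
    (h : IsStable (Transform P) M') : IsSupported P (Sum.inl ⁻¹' M') :=
  h.isSupported.preimage_inl_of_transform

/-- If `M'` is a stable model of `T(P)`, then `M = M' ∩ A`
(the original atoms of `M'`, i.e. `Sum.inl ⁻¹' M'`) is a supported model of `P`. -/
theorem stable_model_of_transform_gives_supported_model
    {A R : Type*} [Fintype R] (P : R → Rule A) (M' : Set (A ⊕ R))
    (h : IsStable (Transform P) M') : IsSupported P (Sum.inl ⁻¹' M') :=
  stable_model_of_transform_gives_supported_model_general P M' h
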